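/- arXiv:2201.11179 — 5 statements merged into one kernel-verified Lean document; each statement's English description precedes it below -/
import Mathlib

section
/- Let n ≥ 2 and let u : [0,∞) → ℝ be a solution of u''/(1+(u')²) − (n−1)/u + (1/2) r u' − (1/2) u = 0 with u(0) = a > 0 and u'(0) > 0, defined and C² on [0,∞), and suppose u stays positive wherever it is defined. Then u has no critical point on (0,∞), hence u'(r) > 0 for all r ≥ 0 and u is strictly increasing. -/
/-!
At a critical point of `u` where `u > 0`, the ODE reduces to `u'' = (n - 1)/u + u/2 > 0`, so `u'`
can only cross zero upwards. Since `u'(0) > 0`, `u'` then has no first zero on `(0, ∞)`: just to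
the left of it `u'` would be positive, which is incompatible with an upward crossing. Hence
`u' > 0` on `[0, ∞)` and `u` is strictly increasing.
-/

open Set Filter Topology

theorem ContinuousOn.pos_of_hasDerivWithinAt_Iio_pos_of_eq_zero {g : ℝ → ℝ} {a : ℝ}
    (hg : ContinuousOn g (Ici a)) (ha : 0 < g a)
    (hzero : ∀ t > a, g t = 0 → ∃ g', HasDerivWithinAt g g' (Iio t) t ∧ 0 < g') :
    ∀ r ∈ Ici a, 0 < g r := by
  by_contra! ⟨r, hr, hgr⟩
  set S := Icc a r ∩ g ⁻¹' {0}
  have hS : S.Nonempty := intermediate_value_Icc' hr (hg.mono Icc_subset_Ici_self) ⟨hgr, ha.le⟩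
  have hSclosed : IsClosed S :=
    (hg.mono Icc_subset_Ici_self).preimage_isClosed_of_isClosed isClosed_Icc isClosed_singleton
  have hSbdd : BddBelow S := ⟨a, fun s hs => hs.1.1⟩
  -- the first zero of `g` on `[a, r]`
  set t := sInf S
  obtain ⟨⟨hta, htr⟩, hgt⟩ : t ∈ S := hSclosed.csInf_mem hS hSbdd
  have hat : a < t := hta.lt_of_ne fun h => ha.ne' (h ▸ hgt)
  have hpos : ∀ s ∈ Ico a t, 0 < g s := by
    intro s hs
    by_contra! hgs
    obtain ⟨c, hc, hgc⟩ :=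
      intermediate_value_Icc' hs.1 (hg.mono Icc_subset_Ici_self) ⟨hgs, ha.le⟩
    exact (csInf_le hSbdd ⟨⟨hc.1, hc.2.trans (hs.2.le.trans htr)⟩, hgc⟩).not_gt
      (hc.2.trans_lt hs.2)
  obtain ⟨g', hder, hg'⟩ := hzero t hat hgt
  have hslope : ∀ᶠ s in 𝓝[<] t, 0 < slope g t s :=
    ((hasDerivWithinAt_iff_tendsto_slope' self_notMem_Iio).1 hder).eventually
      (eventually_gt_nhds hg')
  obtain ⟨s, hs, hst⟩ := (hslope.and (Ioo_mem_nhdsLT hat)).exists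
  rw [slope_def_field, hgt, sub_zero] at hs
  exact (div_neg_of_pos_of_neg (hpos s ⟨hst.1.le, hst.2⟩) (sub_neg.2 hst.2)).not_gt hs

theorem ContDiffOn.continuousOn_deriv_Ici {u : ℝ → ℝ} {a : ℝ} (hu : ContDiffOn ℝ 1 u (Ici a))
    (ha : DifferentiableAt ℝ u a) : ContinuousOn (deriv u) (Ici a) := by
  have hdiff : ∀ r ∈ Ici a, DifferentiableAt ℝ u r := fun r hr =>
    (mem_Ici.1 hr).eq_or_lt.elim (fun h => h ▸ ha)
      (fun h => (hu.differentiableOn one_ne_zero).differentiableAt (Ici_mem_nhds h))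
  exact (hu.continuousOn_derivWithin (uniqueDiffOn_Ici a) le_rfl).congr fun r hr =>
    ((hdiff r hr).derivWithin (uniqueDiffOn_Ici a r hr)).symm

theorem ContDiffOn.hasDerivAt_deriv {u : ℝ → ℝ} {s : Set ℝ} {t : ℝ} (hu : ContDiffOn ℝ 2 u s)
    (hs : s ∈ 𝓝 t) : HasDerivAt (deriv u) (deriv (deriv u) t) t := by
  obtain ⟨U, hUs, hUopen, htU⟩ := mem_nhds_iff.1 hs
  have hu' : ContDiffOn ℝ 1 (deriv u) U := (hu.mono hUs).deriv_of_isOpen hUopen (by norm_num)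
  exact ((hu'.contDiffAt (hUopen.mem_nhds htU)).differentiableAt one_ne_zero).hasDerivAt

theorem deriv_deriv_pos_of_deriv_eq_zero {n : ℕ} (hn : 1 ≤ n) {u : ℝ → ℝ} {r : ℝ}
    (hode : deriv (deriv u) r / (1 + (deriv u r) ^ 2) - ((n : ℝ) - 1) / u r
      + (1 / 2) * r * deriv u r - (1 / 2) * u r = 0)
    (hu : 0 < u r) (hcrit : deriv u r = 0) : 0 < deriv (deriv u) r := by
  have hn' : (0 : ℝ) ≤ n - 1 := sub_nonneg.2 (by exact_mod_cast hn)
  rw [hcrit] at hode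
  have : deriv (deriv u) r = ((n : ℝ) - 1) / u r + (1 / 2) * u r := by
    norm_num at hode; linarith
  rw [this]
  positivity

theorem stmt_1_general (n : ℕ) (hn : 2 ≤ n) (u : ℝ → ℝ)
    (hreg : ContDiffOn ℝ 2 u (Set.Ici 0))
    (hode : ∀ r ∈ Set.Ici (0 : ℝ),
      deriv (deriv u) r / (1 + (deriv u r) ^ 2) - ((n : ℝ) - 1) / u r
        + (1 / 2) * r * deriv u r - (1 / 2) * u r = 0)
    (h0' : 0 < deriv u 0)
    (hupos : ∀ r ∈ Set.Ici (0 : ℝ), 0 < u r) :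
    (∀ r > (0 : ℝ), deriv u r ≠ 0) ∧ (∀ r ∈ Set.Ici (0 : ℝ), 0 < deriv u r) ∧
      StrictMonoOn u (Set.Ici 0) := by
  have hcont : ContinuousOn (deriv u) (Ici 0) :=
    (hreg.of_le one_le_two).continuousOn_deriv_Ici
      (differentiableAt_of_deriv_ne_zero h0'.ne')
  have hpos : ∀ r ∈ Ici (0 : ℝ), 0 < deriv u r :=
    hcont.pos_of_hasDerivWithinAt_Iio_pos_of_eq_zero h0' fun t ht hcrit =>
      ⟨_, (hreg.hasDerivAt_deriv (Ici_mem_nhds ht)).hasDerivWithinAt,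
        deriv_deriv_pos_of_deriv_eq_zero (by omega) (hode t ht.le) (hupos t ht.le) hcrit⟩
  refine ⟨fun r hr => (hpos r hr.le).ne', hpos, ?_⟩
  exact strictMonoOn_of_deriv_pos (convex_Ici 0) hreg.continuousOn fun x hx =>
    hpos x (interior_subset hx)

/-- A positive solution of the self-expander ODE on `[0,∞)` with `u(0) = a > 0`
and `u'(0) > 0` has no critical point on `(0,∞)`; in fact `u' > 0` everywhere on
`[0,∞)` and `u` is strictly increasing. -/
theorem stmt_1 (n : ℕ) (hn : 2 ≤ n) (a : ℝ) (ha : 0 < a) (u : ℝ → ℝ)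
    (hreg : ContDiffOn ℝ 2 u (Set.Ici 0))
    (hode : ∀ r ∈ Set.Ici (0 : ℝ),
      deriv (deriv u) r / (1 + (deriv u r) ^ 2) - ((n : ℝ) - 1) / u r
        + (1 / 2) * r * deriv u r - (1 / 2) * u r = 0)
    (h0 : u 0 = a) (h0' : 0 < deriv u 0)
    (hupos : ∀ r ∈ Set.Ici (0 : ℝ), 0 < u r) :
    (∀ r > (0 : ℝ), deriv u r ≠ 0) ∧ (∀ r ∈ Set.Ici (0 : ℝ), 0 < deriv u r) ∧
      StrictMonoOn u (Set.Ici 0) :=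
  stmt_1_general n hn u hreg hode h0' hupos
end

section
/- Let n ≥ 2 and let u : (0,∞) → ℝ be a positive C² solution of u''/(1+(u')²) − (n−1)/u + (1/2) r u' − (1/2) u = 0. Define α(r) = arctan(u(r)/r). Then at any critical point r₀ of α (i.e. r₀ u'(r₀) = u(r₀)) one has α''(r₀) = r₀ u''(r₀)/(u(r₀)² + r₀²) > 0; in particular every critical point of α is a strict local minimum, and since α is bounded, the limit lim_{r→∞} α(r) exists. -/
/-!
At a critical point of `α(r) = arctan (u r / r)` we have `r u' = u`, so the last two terms of the
ODE cancel and it reduces to `u'' = (1 + u'²)(n - 1)/u > 0`; differentiating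
`α' = (r u' - u)/(u² + r²)` there gives `α'' = r u''/(u² + r²) > 0`. Since `α''` is positive
wherever `α'` vanishes, `α'` can only change sign from negative to positive, so `α` is eventually
monotone; being bounded, it converges.
-/

open Real Set Filter Topology

section MonotoneLimit

variable {ι β : Type*} [Preorder ι] [IsDirectedOrder ι]
  [ConditionallyCompleteLinearOrder β] [TopologicalSpace β] [OrderTopology β] {f : ι → β} {a : ι}

theorem MonotoneOn.exists_tendsto_atTop (hf : MonotoneOn f (Ici a)) (hbdd : BddAbove (f '' Ici a)) :
    ∃ L, Tendsto f atTop (𝓝 L) :=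
  ⟨_, tendsto_comp_val_Ici_atTop.mp <|
    tendsto_atTop_ciSup (fun x y h => hf x.2 y.2 h) (by rwa [← image_eq_range])⟩

theorem AntitoneOn.exists_tendsto_atTop (hf : AntitoneOn f (Ici a)) (hbdd : BddBelow (f '' Ici a)) :
    ∃ L, Tendsto f atTop (𝓝 L) :=
  ⟨_, tendsto_comp_val_Ici_atTop.mp <|
    tendsto_atTop_ciInf (fun x y h => hf x.2 y.2 h) (by rwa [← image_eq_range])⟩

end MonotoneLimit

theorem nonneg_of_deriv_pos_of_eq_zero {g : ℝ → ℝ} {a : ℝ}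
    (hg : ∀ x ∈ Ici a, DifferentiableAt ℝ g x) (hzero : ∀ x ∈ Ici a, g x = 0 → 0 < deriv g x)
    (ha : 0 ≤ g a) {x : ℝ} (hx : x ∈ Ici a) : 0 ≤ g x := by
  have hsub : Icc a x ⊆ Ici a := Icc_subset_Ici_self
  refine image_le_of_deriv_right_lt_deriv_boundary' (f := 0) (f' := 0) (B' := deriv g)
    continuousOn_const (fun _ _ => hasDerivWithinAt_const _ _ _) ha
    (fun y hy => (hg y (hsub hy)).continuousAt.continuousWithinAt)
    (fun y hy => (hg y (hsub (Ico_subset_Icc_self hy))).hasDerivAt.hasDerivWithinAt)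
    (fun y hy hy0 => hzero y (hsub (Ico_subset_Icc_self hy)) hy0.symm) ⟨hx, le_rfl⟩

theorem exists_tendsto_atTop_of_deriv_deriv_pos {f : ℝ → ℝ} {a : ℝ}
    (hf : ∀ x ∈ Ioi a, DifferentiableAt ℝ f x) (hf' : ∀ x ∈ Ioi a, DifferentiableAt ℝ (deriv f) x)
    (hcrit : ∀ x ∈ Ioi a, deriv f x = 0 → 0 < deriv (deriv f) x)
    (hbdd : BddAbove (range f)) (hbdd' : BddBelow (range f)) :
    ∃ L, Tendsto f atTop (𝓝 L) := by
  have hIci : ∀ {b}, a < b → Ici b ⊆ Ioi a := fun hab _ hx => hab.trans_le hx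
  have hcont : ∀ {b}, a < b → ContinuousOn f (Ici b) := fun hab x hx =>
    (hf x (hIci hab hx)).continuousAt.continuousWithinAt
  have hdiff : ∀ {b}, a < b → DifferentiableOn ℝ f (interior (Ici b)) := fun hab x hx =>
    (hf x (hIci hab (interior_subset hx))).differentiableWithinAt
  by_cases hup : ∃ b ∈ Ioi a, 0 ≤ deriv f b
  · obtain ⟨b, hab, hb⟩ := hup
    have hnonneg : ∀ x ∈ Ici b, 0 ≤ deriv f x := fun x =>
      nonneg_of_deriv_pos_of_eq_zero (fun y hy => hf' y (hIci hab hy))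
        (fun y hy => hcrit y (hIci hab hy)) hb
    exact MonotoneOn.exists_tendsto_atTop
      (monotoneOn_of_deriv_nonneg (convex_Ici b) (hcont hab) (hdiff hab)
        fun x hx => hnonneg x (interior_subset hx))
      (hbdd.mono (image_subset_range _ _))
  · push Not at hup
    have hab : a < a + 1 := lt_add_one a
    exact AntitoneOn.exists_tendsto_atTop
      (antitoneOn_of_deriv_nonpos (convex_Ici (a + 1)) (hcont hab) (hdiff hab)
        fun x hx => (hup x (hIci hab (interior_subset hx))).le)
      (hbdd'.mono (image_subset_range _ _))

theorem hasDerivAt_arctan_div_self {u : ℝ → ℝ} {u' r : ℝ} (hu : HasDerivAt u u' r) (hr : r ≠ 0) :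
    HasDerivAt (fun r => arctan (u r / r)) ((r * u' - u r) / (u r ^ 2 + r ^ 2)) r := by
  convert (hu.fun_div (hasDerivAt_id' r) hr).arctan using 1
  have : u r ^ 2 + r ^ 2 ≠ 0 := by positivity
  field_simp
  ring

theorem hasDerivAt_div_of_mul_eq {u v : ℝ → ℝ} {v' r : ℝ} (hu : HasDerivAt u (v r) r)
    (hv : HasDerivAt v v' r) (hr : r ≠ 0) (hcrit : r * v r = u r) :
    HasDerivAt (fun r => (r * v r - u r) / (u r ^ 2 + r ^ 2)) (r * v' / (u r ^ 2 + r ^ 2)) r := by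
  have hD : u r ^ 2 + r ^ 2 ≠ 0 := by positivity
  refine ((((hasDerivAt_id' r).mul hv).sub hu).fun_div
    ((hu.pow 2).add ((hasDerivAt_id' r).pow 2)) hD).congr_deriv ?_
  simp only [Pi.sub_apply, Pi.mul_apply, Pi.add_apply, Pi.pow_apply]
  field_simp
  linear_combination (-2 * (v r * u r + r)) * (sub_eq_zero.mpr hcrit)

section AngleFunction

variable {u : ℝ → ℝ} {s : Set ℝ} {r : ℝ}

theorem deriv_arctan_div_self_eventuallyEq (hs : IsOpen s) (h0 : (0 : ℝ) ∉ s)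
    (hu : DifferentiableOn ℝ u s) (hr : r ∈ s) :
    deriv (fun r => arctan (u r / r)) =ᶠ[𝓝 r]
      fun r => (r * deriv u r - u r) / (u r ^ 2 + r ^ 2) := by
  filter_upwards [hs.mem_nhds hr] with x hx using
    (hasDerivAt_arctan_div_self ((hu x hx).differentiableAt (hs.mem_nhds hx)).hasDerivAt
      (ne_of_mem_of_not_mem hx h0)).deriv

theorem deriv_arctan_div_self_eq_zero_iff (hs : IsOpen s) (h0 : (0 : ℝ) ∉ s)
    (hu : DifferentiableOn ℝ u s) (hr : r ∈ s) :
    deriv (fun r => arctan (u r / r)) r = 0 ↔ r * deriv u r = u r := by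
  have hr0 : r ≠ 0 := ne_of_mem_of_not_mem hr h0
  have hD : u r ^ 2 + r ^ 2 ≠ 0 := by positivity
  rw [(deriv_arctan_div_self_eventuallyEq hs h0 hu hr).eq_of_nhds, div_eq_zero_iff, sub_eq_zero,
    or_iff_left hD]

theorem differentiableAt_deriv_arctan_div_self (hs : IsOpen s) (h0 : (0 : ℝ) ∉ s)
    (hu : DifferentiableOn ℝ u s) (hu' : DifferentiableOn ℝ (deriv u) s) (hr : r ∈ s) :
    DifferentiableAt ℝ (deriv fun r => arctan (u r / r)) r := by
  have hr0 : r ≠ 0 := ne_of_mem_of_not_mem hr h0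
  have hD : u r ^ 2 + r ^ 2 ≠ 0 := by positivity
  have hur := (hu r hr).differentiableAt (hs.mem_nhds hr)
  have hg : DifferentiableAt ℝ (fun r => (r * deriv u r - u r) / (u r ^ 2 + r ^ 2)) r :=
    ((differentiableAt_id.mul ((hu' r hr).differentiableAt (hs.mem_nhds hr))).sub hur).div
      ((hur.pow 2).add (differentiableAt_id.pow 2)) hD
  exact hg.congr_of_eventuallyEq (deriv_arctan_div_self_eventuallyEq hs h0 hu hr)

theorem deriv_deriv_arctan_div_self_of_mul_eq (hs : IsOpen s) (h0 : (0 : ℝ) ∉ s)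
    (hu : DifferentiableOn ℝ u s) (hu' : DifferentiableOn ℝ (deriv u) s) (hr : r ∈ s)
    (hcrit : r * deriv u r = u r) :
    deriv (deriv fun r => arctan (u r / r)) r = r * deriv (deriv u) r / (u r ^ 2 + r ^ 2) := by
  rw [(deriv_arctan_div_self_eventuallyEq hs h0 hu hr).deriv_eq]
  exact (hasDerivAt_div_of_mul_eq ((hu r hr).differentiableAt (hs.mem_nhds hr)).hasDerivAt
    ((hu' r hr).differentiableAt (hs.mem_nhds hr)).hasDerivAt
    (ne_of_mem_of_not_mem hr h0) hcrit).deriv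

end AngleFunction

theorem pos_of_selfExpander_of_mul_eq {n r u u' u'' : ℝ} (hn : 1 < n) (hu : 0 < u)
    (hcrit : r * u' = u)
    (hode : u'' / (1 + u' ^ 2) - (n - 1) / u + 1 / 2 * r * u' - 1 / 2 * u = 0) : 0 < u'' := by
  have hq : u'' / (1 + u' ^ 2) = (n - 1) / u := by linear_combination hode - 1 / 2 * hcrit
  have : 0 < u'' / (1 + u' ^ 2) := hq ▸ div_pos (by linarith) hu
  exact (div_pos_iff_of_pos_right (by positivity)).mp this

/-- For a positive solution `u` of the self-expander ODE on `(0,∞)`, the angle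
function `α(r) = arctan(u(r)/r)` satisfies, at any critical point `r₀`
(i.e. `r₀ u'(r₀) = u(r₀)`), `α''(r₀) = r₀ u''(r₀)/(u(r₀)² + r₀²) > 0`; so every
critical point of `α` is a strict local minimum, and `α` has a limit at `∞`. -/
theorem stmt_2 (n : ℕ) (hn : 2 ≤ n) (u : ℝ → ℝ)
    (hreg : ContDiffOn ℝ 2 u (Set.Ioi 0))
    (hupos : ∀ r ∈ Set.Ioi (0 : ℝ), 0 < u r)
    (hode : ∀ r ∈ Set.Ioi (0 : ℝ),
      deriv (deriv u) r / (1 + (deriv u r) ^ 2) - ((n : ℝ) - 1) / u r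
        + (1 / 2) * r * deriv u r - (1 / 2) * u r = 0) :
    (∀ r₀ ∈ Set.Ioi (0 : ℝ), r₀ * deriv u r₀ = u r₀ →
      deriv (deriv fun r => Real.arctan (u r / r)) r₀
          = r₀ * deriv (deriv u) r₀ / (u r₀ ^ 2 + r₀ ^ 2) ∧
        0 < deriv (deriv fun r => Real.arctan (u r / r)) r₀) ∧
      ∃ L : ℝ, Filter.Tendsto (fun r => Real.arctan (u r / r)) Filter.atTop (nhds L) := by
  have hu : DifferentiableOn ℝ u (Ioi 0) := hreg.differentiableOn two_ne_zero
  have hu' : DifferentiableOn ℝ (deriv u) (Ioi 0) :=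
    (hreg.deriv_of_isOpen isOpen_Ioi (by norm_num)).differentiableOn one_ne_zero
  have h0 : (0 : ℝ) ∉ Ioi 0 := self_notMem_Ioi
  have hα'' : ∀ r₀ ∈ Ioi (0 : ℝ), r₀ * deriv u r₀ = u r₀ →
      deriv (deriv fun r => arctan (u r / r)) r₀
          = r₀ * deriv (deriv u) r₀ / (u r₀ ^ 2 + r₀ ^ 2) ∧
        0 < deriv (deriv fun r => arctan (u r / r)) r₀ := by
    intro r₀ (hr₀ : 0 < r₀) hcrit
    rw [deriv_deriv_arctan_div_self_of_mul_eq isOpen_Ioi h0 hu hu' hr₀ hcrit]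
    have := pos_of_selfExpander_of_mul_eq (by exact_mod_cast hn) (hupos r₀ hr₀) hcrit (hode r₀ hr₀)
    exact ⟨rfl, by positivity⟩
  refine ⟨hα'', exists_tendsto_atTop_of_deriv_deriv_pos (a := 0)
    (fun r hr => ?_) (fun r hr => differentiableAt_deriv_arctan_div_self isOpen_Ioi h0 hu hu' hr)
    (fun r hr hα' => (hα'' r hr
      ((deriv_arctan_div_self_eq_zero_iff isOpen_Ioi h0 hu hr).mp hα')).2) ?_ ?_⟩
  · exact ((hu r hr).differentiableAt (Ioi_mem_nhds hr)).fun_div differentiableAt_id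
      (ne_of_gt hr) |>.arctan
  · exact ⟨π / 2, forall_mem_range.mpr fun r => (arctan_lt_pi_div_two _).le⟩
  · exact ⟨-(π / 2), forall_mem_range.mpr fun r => (neg_pi_div_two_lt_arctan _).le⟩
end

section
/- Let n ≥ 2 and let u : [0,∞) → ℝ be a positive, strictly increasing C³ solution of u''/(1+(u')²) − (n−1)/u + (1/2) r u' − (1/2) u = 0. Then at any zero r₀ of u'' one has u'''(r₀) = −(1+u'(r₀)²)(n−1) u'(r₀)/u(r₀)² < 0. Consequently u'' has at most one zero on (0,∞). -/
/-!
Solving the ODE for `u''` gives `u'' = (1 + u'²) F` with `F = (n-1)/u - r u'/2 + u/2`. At a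
zero `r₀ > 0` of `u''` the factor `1 + u'²` is stationary and the `r u''` term of `F'` vanishes,
so `u'''(r₀) = -(1 + u'²)(n-1) u'/u²`; the ODE at `r₀` also gives `r₀ u' = u + 2(n-1)/u > 0`,
hence `u'''(r₀) < 0`. A continuous function that crosses zero downwards at each of its zeros has
at most one zero on an interval: between two downward crossings it would have to cross upwards.
-/

open Set Filter Topology SignType

section ZerosOfDerivNeg

variable {g : ℝ → ℝ} {x₀ : ℝ}

lemma eventually_neg_nhdsGT_of_deriv_neg (hd : deriv g x₀ < 0) (h0 : g x₀ = 0) :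
    ∀ᶠ x in 𝓝[>] x₀, g x < 0 := by
  filter_upwards [nhdsWithin_le_nhds (eventually_nhdsWithin_sign_eq_of_deriv_neg hd h0),
    self_mem_nhdsWithin] with x hsign (hx : x₀ < x)
  rwa [sign_neg (sub_neg.mpr hx), sign_eq_neg_one_iff] at hsign

lemma eventually_pos_nhdsLT_of_deriv_neg (hd : deriv g x₀ < 0) (h0 : g x₀ = 0) :
    ∀ᶠ x in 𝓝[<] x₀, 0 < g x := by
  filter_upwards [nhdsWithin_le_nhds (eventually_nhdsWithin_sign_eq_of_deriv_neg hd h0),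
    self_mem_nhdsWithin] with x hsign (hx : x < x₀)
  rwa [sign_pos (sub_pos.mpr hx), sign_eq_one_iff] at hsign

/-- `g < 0` just right of `a`; the least zero `c` of `g` in `[x₀, b]` has `g > 0` just left of it,
and the intermediate value theorem then produces a zero in `[x₀, c)`. -/
lemma eq_of_deriv_neg_of_zeros {a b : ℝ} (hab : a ≤ b) (hg : ContinuousOn g (Icc a b))
    (hd : ∀ x ∈ Icc a b, g x = 0 → deriv g x < 0) (ha : g a = 0) (hb : g b = 0) : a = b := by
  by_contra hne
  have hab : a < b := lt_of_le_of_ne hab hne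
  obtain ⟨x₀, hx₀neg, hx₀⟩ := ((eventually_neg_nhdsGT_of_deriv_neg
    (hd a (left_mem_Icc.mpr hab.le) ha) ha).and (Ioo_mem_nhdsGT hab)).exists
  have hsub : Icc x₀ b ⊆ Icc a b := Icc_subset_Icc_left hx₀.1.le
  have hK : IsCompact (Icc x₀ b ∩ g ⁻¹' {0}) :=
    isCompact_Icc.of_isClosed_subset
      ((hg.mono hsub).preimage_isClosed_of_isClosed isClosed_Icc isClosed_singleton)
      inter_subset_left
  obtain ⟨c, ⟨hc, hc0⟩, hcmin⟩ := hK.exists_isLeast ⟨b, ⟨hx₀.2.le, le_rfl⟩, hb⟩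
  have hx₀c : x₀ < c := lt_of_le_of_ne hc.1 (by rintro rfl; simp_all)
  obtain ⟨y, hypos, hy⟩ := ((eventually_pos_nhdsLT_of_deriv_neg (hd c (hsub hc) hc0) hc0).and
    (Ioo_mem_nhdsLT hx₀c)).exists
  obtain ⟨w, hw, hw0⟩ := intermediate_value_Icc hy.1.le
    (hg.mono ((Icc_subset_Icc_right (hy.2.le.trans hc.2)).trans hsub)) ⟨hx₀neg.le, hypos.le⟩
  exact (hcmin ⟨⟨hw.1, hw.2.trans (hy.2.le.trans hc.2)⟩, hw0⟩).not_gt (hw.2.trans_lt hy.2)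

lemma Set.OrdConnected.subsingleton_zeros_of_deriv_neg {s : Set ℝ} (hs : s.OrdConnected)
    (hg : ContinuousOn g s) (hd : ∀ x ∈ s, g x = 0 → deriv g x < 0) :
    {x | x ∈ s ∧ g x = 0}.Subsingleton := by
  intro a ha b hb
  wlog hab : a ≤ b generalizing a b
  · exact (this hb ha (le_of_not_ge hab)).symm
  exact eq_of_deriv_neg_of_zeros hab (hg.mono (hs.out ha.1 hb.1))
    (fun x hx => hd x (hs.out ha.1 hb.1 hx)) ha.2 hb.2

end ZerosOfDerivNeg

section SelfExpander

/-- The self-expander ODE at `r`, with `k` standing for `n - 1`. -/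
def SelfExpanderODE (k : ℝ) (u : ℝ → ℝ) (r : ℝ) : Prop :=
  deriv (deriv u) r / (1 + (deriv u r) ^ 2) - k / u r + (1 / 2) * r * deriv u r - (1 / 2) * u r = 0

variable {k : ℝ} {u : ℝ → ℝ} {r : ℝ}

lemma SelfExpanderODE.deriv_deriv_eq (h : SelfExpanderODE k u r) :
    deriv (deriv u) r = (1 + deriv u r ^ 2) * (k / u r - 1 / 2 * r * deriv u r + 1 / 2 * u r) := by
  have hpos : 0 < 1 + deriv u r ^ 2 := by positivity
  unfold SelfExpanderODE at h
  rw [mul_comm, ← div_eq_iff hpos.ne']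
  linarith

lemma SelfExpanderODE.deriv_pos (h : SelfExpanderODE k u r) (hk : 0 ≤ k) (hr : 0 < r)
    (hu : 0 < u r) (hz : deriv (deriv u) r = 0) : 0 < deriv u r := by
  unfold SelfExpanderODE at h
  rw [hz, zero_div] at h
  have : 0 ≤ k / u r := by positivity
  exact pos_of_mul_pos_right (by linarith : 0 < r * deriv u r) hr.le

lemma hasDerivAt_deriv_deriv_of_selfExpanderODE (hu : HasDerivAt u (deriv u r) r)
    (hu' : HasDerivAt (deriv u) 0 r) (hu0 : u r ≠ 0)
    (hode : ∀ᶠ s in 𝓝 r, SelfExpanderODE k u s) :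
    HasDerivAt (deriv (deriv u)) (-(1 + deriv u r ^ 2) * k * deriv u r / u r ^ 2) r := by
  have hprod := ((hu'.pow 2).const_add 1).mul
    ((((hasDerivAt_const r k).div hu hu0).sub
      (((hasDerivAt_id r).const_mul (1 / 2 : ℝ)).mul hu')).add (hu.const_mul (1 / 2 : ℝ)))
  refine (hprod.congr_deriv ?_).congr_of_eventuallyEq
    (hode.mono fun s hs => hs.deriv_deriv_eq)
  simp only [Pi.pow_apply]
  field_simp
  ring

end SelfExpander

theorem stmt_3_general (n : ℕ) (hn : 2 ≤ n) (u : ℝ → ℝ)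
    (hreg : ContDiffOn ℝ 3 u (Set.Ici 0))
    (hupos : ∀ r ∈ Set.Ici (0 : ℝ), 0 < u r)
    (hode : ∀ r ∈ Set.Ici (0 : ℝ),
      deriv (deriv u) r / (1 + (deriv u r) ^ 2) - ((n : ℝ) - 1) / u r
        + (1 / 2) * r * deriv u r - (1 / 2) * u r = 0) :
    (∀ r₀ ∈ Set.Ioi (0 : ℝ), deriv (deriv u) r₀ = 0 →
      deriv (deriv (deriv u)) r₀
          = -(1 + (deriv u r₀) ^ 2) * ((n : ℝ) - 1) * deriv u r₀ / (u r₀) ^ 2 ∧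
        deriv (deriv (deriv u)) r₀ < 0) ∧
      Set.Subsingleton {r : ℝ | r ∈ Set.Ioi (0 : ℝ) ∧ deriv (deriv u) r = 0} := by
  have hk : (0 : ℝ) < n - 1 := by
    have : (2 : ℝ) ≤ n := by exact_mod_cast hn
    linarith
  have hC2 : ContDiffOn ℝ 2 (deriv u) (Ioi 0) :=
    (hreg.mono Ioi_subset_Ici_self).deriv_of_isOpen isOpen_Ioi (by norm_num)
  have hC1 : ContDiffOn ℝ 1 (deriv (deriv u)) (Ioi 0) :=
    hC2.deriv_of_isOpen isOpen_Ioi (by norm_num)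
  have hthird : ∀ r₀ ∈ Ioi (0 : ℝ), deriv (deriv u) r₀ = 0 →
      deriv (deriv (deriv u)) r₀
          = -(1 + (deriv u r₀) ^ 2) * ((n : ℝ) - 1) * deriv u r₀ / (u r₀) ^ 2 ∧
        deriv (deriv (deriv u)) r₀ < 0 := by
    intro r₀ hr₀ hz
    have hu0 : 0 < u r₀ := hupos r₀ (Ioi_subset_Ici_self hr₀)
    have hu'0 : 0 < deriv u r₀ :=
      SelfExpanderODE.deriv_pos (hode r₀ (Ioi_subset_Ici_self hr₀)) hk.le hr₀ hu0 hz
    have hnhds : Ioi (0 : ℝ) ∈ 𝓝 r₀ := isOpen_Ioi.mem_nhds hr₀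
    have hu : HasDerivAt u (deriv u r₀) r₀ :=
      ((hreg.mono Ioi_subset_Ici_self).differentiableOn (by norm_num)).differentiableAt
        hnhds |>.hasDerivAt
    have hu' : HasDerivAt (deriv u) 0 r₀ :=
      hz ▸ ((hC2.differentiableOn (by norm_num)).differentiableAt hnhds).hasDerivAt
    rw [(hasDerivAt_deriv_deriv_of_selfExpanderODE hu hu' hu0.ne'
      (mem_of_superset hnhds fun r hr => hode r (Ioi_subset_Ici_self hr))).deriv]
    refine ⟨rfl, ?_⟩
    rw [neg_mul, neg_mul, neg_div, neg_lt_zero]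
    positivity
  exact ⟨hthird, ordConnected_Ioi.subsingleton_zeros_of_deriv_neg hC1.continuousOn
    fun r hr hz => (hthird r hr hz).1 ▸ (hthird r hr hz).2⟩

/-- For a positive, strictly increasing `C³` solution of the self-expander ODE,
at any zero `r₀ > 0` of `u''` one has
`u'''(r₀) = -(1+u'(r₀)²)(n-1)u'(r₀)/u(r₀)² < 0`; consequently `u''` has at most
one zero on `(0,∞)`. -/
theorem stmt_3 (n : ℕ) (hn : 2 ≤ n) (u : ℝ → ℝ)
    (hreg : ContDiffOn ℝ 3 u (Set.Ici 0))
    (hupos : ∀ r ∈ Set.Ici (0 : ℝ), 0 < u r)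
    (hmono : StrictMonoOn u (Set.Ici 0))
    (hode : ∀ r ∈ Set.Ici (0 : ℝ),
      deriv (deriv u) r / (1 + (deriv u r) ^ 2) - ((n : ℝ) - 1) / u r
        + (1 / 2) * r * deriv u r - (1 / 2) * u r = 0) :
    (∀ r₀ ∈ Set.Ioi (0 : ℝ), deriv (deriv u) r₀ = 0 →
      deriv (deriv (deriv u)) r₀
          = -(1 + (deriv u r₀) ^ 2) * ((n : ℝ) - 1) * deriv u r₀ / (u r₀) ^ 2 ∧
        deriv (deriv (deriv u)) r₀ < 0) ∧
      Set.Subsingleton {r : ℝ | r ∈ Set.Ioi (0 : ℝ) ∧ deriv (deriv u) r = 0} :=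
  stmt_3_general n hn u hreg hupos hode
end

section
/- Let n ≥ 2, and suppose u : [r₀,∞) → (0,∞) is C² with u' positive and decreasing on [r₀,∞), and u'' < 0 at 2r₀, satisfying the self-expander ODE at 2r₀. If additionally u(r)/r ≤ C for all r ≥ r₀ (with C ≥ 1), then u'(2r₀) ≤ 2C and r₀ u(2r₀) ≥ (n−1)/(2C), and hence r₀² ≥ (n−1)/(4C²). -/
/-- If `u` is positive with `u'` positive and decreasing on `[r₀,∞)`,
`u''(2r₀) < 0`, `u` satisfies the self-expander ODE at `2r₀`, and
`u(r)/r ≤ C` for `r ≥ r₀` (with `C ≥ 1`), then `u'(2r₀) ≤ 2C`,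
`r₀ u(2r₀) ≥ (n-1)/(2C)` and hence `r₀² ≥ (n-1)/(4C²)`. -/
theorem stmt_16 (n : ℕ) (hn : 2 ≤ n) (r₀ C : ℝ) (hr₀ : 0 < r₀) (hC : 1 ≤ C)
    (u : ℝ → ℝ) (hreg : ContDiffOn ℝ 2 u (Set.Ici r₀))
    (hpos : ∀ r ∈ Set.Ici r₀, 0 < u r)
    (hder : ∀ r ∈ Set.Ici r₀, 0 < deriv u r)
    (hanti : AntitoneOn (deriv u) (Set.Ici r₀))
    (hneg : deriv (deriv u) (2 * r₀) < 0)
    (hode : deriv (deriv u) (2 * r₀) / (1 + (deriv u (2 * r₀)) ^ 2)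
        - ((n : ℝ) - 1) / u (2 * r₀) + (1 / 2) * (2 * r₀) * deriv u (2 * r₀)
        - (1 / 2) * u (2 * r₀) = 0)
    (hratio : ∀ r ∈ Set.Ici r₀, u r / r ≤ C) :
    deriv u (2 * r₀) ≤ 2 * C ∧
      ((n : ℝ) - 1) / (2 * C) ≤ r₀ * u (2 * r₀) ∧
      ((n : ℝ) - 1) / (4 * C ^ 2) ≤ r₀ ^ 2 := by
  have h2r : r₀ ≤ 2 * r₀ := by linarith
  have h2mem : (2 * r₀) ∈ Set.Ici r₀ := h2r
  have hA : 0 < u (2 * r₀) := hpos _ h2mem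
  have hB : 0 < deriv u (2 * r₀) := hder _ h2mem
  -- u (2r₀) ≤ 2 C r₀
  have hAle : u (2 * r₀) ≤ 2 * C * r₀ := by
    have := hratio _ h2mem
    rw [div_le_iff₀ (by linarith)] at this
    linarith
  -- MVT: ∃ c ∈ Ioo r₀ (2r₀), deriv u c = (u (2r₀) - u r₀)/r₀
  have hcont : ContinuousOn u (Set.Icc r₀ (2 * r₀)) :=
    (hreg.continuousOn).mono (Set.Icc_subset_Ici_self)
  have hdiff : ∀ x ∈ Set.Ioo r₀ (2 * r₀), HasDerivAt u (deriv u x) x := by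
    intro x hx
    have hx' : x ∈ interior (Set.Ici r₀) := by
      rw [interior_Ici]; exact hx.1
    have : DifferentiableAt ℝ u x := by
      have := (hreg.differentiableOn (by norm_num)).differentiableAt
        (Ici_mem_nhds hx.1)
      exact this
    exact this.hasDerivAt
  obtain ⟨c, hc, hceq⟩ := exists_hasDerivAt_eq_slope u (deriv u)
    (by linarith : r₀ < 2 * r₀) hcont hdiff
  have hmono : deriv u (2 * r₀) ≤ deriv u c :=
    hanti (le_of_lt hc.1) h2mem (le_of_lt hc.2)
  have hslope : deriv u c = (u (2 * r₀) - u r₀) / r₀ := by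
    rw [hceq]; ring_nf
  have hur₀ : 0 < u r₀ := hpos _ (le_refl r₀)
  -- r₀ * B ≤ A
  have hkey : r₀ * deriv u (2 * r₀) ≤ u (2 * r₀) := by
    have : deriv u (2 * r₀) ≤ (u (2 * r₀) - u r₀) / r₀ := hslope ▸ hmono
    rw [le_div_iff₀ hr₀] at this
    nlinarith
  have hBle : deriv u (2 * r₀) ≤ 2 * C := by
    nlinarith
  -- From the ODE
  have h1B : 0 < 1 + (deriv u (2 * r₀)) ^ 2 := by positivity
  have hDneg : deriv (deriv u) (2 * r₀) / (1 + (deriv u (2 * r₀)) ^ 2) < 0 :=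
    div_neg_of_neg_of_pos hneg h1B
  have hode2 : ((n : ℝ) - 1) / u (2 * r₀) < r₀ * deriv u (2 * r₀) := by
    nlinarith [mul_pos (mul_pos hr₀ hB) hA]
  have hn1 : (1 : ℝ) ≤ (n : ℝ) - 1 := by
    have : (2 : ℝ) ≤ (n : ℝ) := by exact_mod_cast hn
    linarith
  have hprod : (n : ℝ) - 1 < r₀ * deriv u (2 * r₀) * u (2 * r₀) := by
    rw [div_lt_iff₀ hA] at hode2
    linarith
  have hC0 : (0 : ℝ) < C := by linarith
  have hmid : ((n : ℝ) - 1) / (2 * C) ≤ r₀ * u (2 * r₀) := by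
    rw [div_le_iff₀ (by linarith : (0:ℝ) < 2 * C)]
    nlinarith
  refine ⟨hBle, hmid, ?_⟩
  rw [div_le_iff₀ (by positivity : (0:ℝ) < 4 * C ^ 2)]
  nlinarith [mul_le_mul_of_nonneg_left hAle (le_of_lt hr₀)]
end

section
/- Suppose ν is a one-dimensional stationary integral varifold cone in ℝ² consisting of k half-rays emanating from the origin, each with multiplicity one, and its Gaussian density (equivalently entropy) is less than 2. Then k ≤ 3; and if additionally ν is cyclic (its associated mod-2 flat chain has no boundary), then k is even, so k = 2 and ν is a union of two opposite rays forming a line through the origin (in particular ν is smooth). -/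
/-- A one-dimensional stationary multiplicity-one cone in `ℝ²`, given by `k`
half-rays with unit direction vectors `d i` summing to zero, whose Gaussian
density `k/2` is less than `2`, has `k ≤ 3`; if moreover the cone is cyclic
(equivalently, `k` is even), then `k = 2` and the two rays are opposite,
forming a line through the origin. -/
theorem stmt_18 (k : ℕ) (hk : 1 ≤ k) (d : Fin k → EuclideanSpace ℝ (Fin 2))
    (hunit : ∀ i, ‖d i‖ = 1) (hstat : ∑ i, d i = 0)
    (hdensity : (k : ℝ) / 2 < 2) :
    k ≤ 3 ∧ (Even k → k = 2 ∧ ∀ i j : Fin k, i ≠ j → d j = -d i) := by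
  have hk4 : k ≤ 3 := by
    have : (k : ℝ) < 4 := by linarith
    exact_mod_cast Nat.lt_succ_iff.mp (by exact_mod_cast this)
  refine ⟨hk4, fun hev => ?_⟩
  have hk2 : k = 2 := by
    interval_cases k <;> simp_all [Nat.even_iff]
  subst hk2
  refine ⟨rfl, fun i j hij => ?_⟩
  rw [Fin.sum_univ_two] at hstat
  fin_cases i <;> fin_cases j <;> simp_all
  · exact eq_neg_of_add_eq_zero_right hstat
  · exact eq_neg_of_add_eq_zero_left hstat
end
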